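/- arXiv:1007.1998 — 2 statements merged into one kernel-verified Lean document; each statement's English description precedes it below -/
import Mathlib

section
/- Let u and v be freely reduced words not containing a_i^{±1} such that the concatenation w = uv is freely reduced. Then |w|_i^simple ≤ |u|_i^simple + |v|_i^simple + 1. -/
/-! Take any decomposition of `u v` into simple blocks. The blocks inside `u`
and those inside `v` decompose `u` and `v` except for the one block straddling the cut, whose two
halves are absorbed into the neighbouring blocks. These stay simple: a longer word has more edges
in its Whitehead graph on the same vertices, and adding edges cannot create a cut vertex. -/

namespace ESPaper

/-- A letter of the free group `F_n` over the standard basis: a generator index and a sign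
    (`true` = the generator, `false` = its inverse). -/
abbrev Ltr (n : ℕ) := Fin n × Bool

/-- A word over the standard basis and its inverses. -/
abbrev Wrd (n : ℕ) := List (Ltr n)

/-- The inverse of a letter. -/
def linv {n : ℕ} (c : Ltr n) : Ltr n := (c.1, !c.2)

/-- The (formal) inverse of a word. -/
def winv {n : ℕ} (w : Wrd n) : Wrd n := w.reverse.map linv

/-- `w` is freely reduced: no two consecutive letters are inverse to each other. -/
def Reduced {n : ℕ} (w : Wrd n) : Prop := List.Chain' (fun a b => b ≠ linv a) w

/-- `w` is cyclically reduced. -/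
def CyclicallyReduced {n : ℕ} (w : Wrd n) : Prop := Reduced (w ++ w)

/-- `w` contains no occurrence of `a_i^{±1}`. -/
def Avoids {n : ℕ} (i : Fin n) (w : Wrd n) : Prop := ∀ c ∈ w, c.1 ≠ i

/-- `w` is a positive word (no inverse letters). -/
def Positive {n : ℕ} (w : Wrd n) : Prop := ∀ c ∈ w, c.2 = true

/-- Vertices of the Whitehead graph over `a ∖ {a_i}`: all letters whose index is not `i`. -/
def WVert (n : ℕ) (i : Fin n) := {c : Ltr n // c.1 ≠ i}

/-- The Whitehead graph `Γ_{a∖{a_i}}(w)`: for each pair of consecutive letters `bc` of `w`,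
    an edge from `b` to `c⁻¹`. -/
def WGraph {n : ℕ} (i : Fin n) (w : Wrd n) : SimpleGraph (WVert n i) where
  Adj x y := x ≠ y ∧ ∃ p ∈ w.zip w.tail,
    (x.1 = p.1 ∧ y.1 = linv p.2) ∨ (y.1 = p.1 ∧ x.1 = linv p.2)
  symm := ⟨by
    rintro x y ⟨hne, p, hp, h⟩
    exact ⟨hne.symm, p, hp, h.symm⟩⟩
  loopless := ⟨fun x h => h.1 rfl⟩

/-- A graph has a cut vertex `v` if it is the union of two subgraphs, each with a vertex
    other than `v`, which intersect exactly in `v`.  (A disconnected graph on at least three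
    vertices automatically has a cut vertex in this sense.) -/
def HasCutVertex {V : Type*} (G : SimpleGraph V) : Prop :=
  ∃ (v : V) (H₁ H₂ : G.Subgraph),
    H₁ ⊔ H₂ = ⊤ ∧ H₁.verts ∩ H₂.verts = {v} ∧ H₁.verts ≠ {v} ∧ H₂.verts ≠ {v}

/-- The simple `i`-length of a word `w` (containing no `a_i^{±1}`): the greatest `t` such
    that `w = w_1 ⋯ w_t` where no Whitehead graph `Γ_{a∖{a_i}}(w_j)` has a cut vertex
    (`0` if there is no such decomposition, in particular if `Γ_{a∖{a_i}}(w)` has a cut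
    vertex). -/
noncomputable def simpleLen {n : ℕ} (i : Fin n) (w : Wrd n) : ℕ :=
  sSup {t | ∃ ps : List (Wrd n), ps.length = t ∧ ps.flatten = w ∧
      ∀ p ∈ ps, p ≠ [] ∧ ¬ HasCutVertex (WGraph i p)}

/-- The conjugate reduced `i`-length of `w`: the minimum over all decompositions
    `w =_r v_1^{u_1} ⋯ v_l^{u_l}` (equality in the free group, `v^u = u⁻¹ v u`) of
    `(l - 1) + Σ_j |v_j|_i^simple`. -/
noncomputable def crLen {n : ℕ} (i : Fin n) (w : Wrd n) : ℕ :=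
  sInf {k | ∃ vs us : List (Wrd n), vs ≠ [] ∧ us.length = vs.length ∧
      (∀ v ∈ vs, Reduced v ∧ Avoids i v) ∧
      FreeGroup.mk w =
        ((vs.zip us).map fun p => (FreeGroup.mk p.2)⁻¹ * FreeGroup.mk p.1 * FreeGroup.mk p.2).prod ∧
      k = (vs.length - 1) + (vs.map (simpleLen i)).sum}

/-- One step of cyclic reduction: cancel the first against the last letter if possible. -/
def stripOnce {n : ℕ} : Wrd n → Wrd n
  | [] => []
  | a :: rest => if rest.getLast? = some (linv a) then rest.dropLast else a :: rest

/-- Cyclic reduction of a (reduced) word. -/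
def cyclicReduce {n : ℕ} (w : Wrd n) : Wrd n := stripOnce^[w.length] w

/-- `u` cyclically precedes position `p` in the cyclic word `v`. -/
def CycPrec {n : ℕ} (v : Wrd n) (p : ℕ) (u : Wrd n) : Prop :=
  u <:+ (v ++ v).take (v.length + p)

/-- `u` cyclically follows position `p` in the cyclic word `v`. -/
def CycFoll {n : ℕ} (v : Wrd n) (p : ℕ) (u : Wrd n) : Prop :=
  u <+: (v ++ v).drop (p + 1)

/-- `u` cyclically precedes every occurrence of `a_i` (and `u⁻¹` cyclically follows every
    occurrence of `a_i⁻¹`) in the cyclic reductions of the words of `Y`. -/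
def IsPrecWord {n : ℕ} (i : Fin n) (Y : List (Wrd n)) (u : Wrd n) : Prop :=
  Avoids i u ∧ ∀ y ∈ Y, ∀ p < (cyclicReduce y).length,
    ((cyclicReduce y)[p]? = some (i, true) → CycPrec (cyclicReduce y) p u) ∧
    ((cyclicReduce y)[p]? = some (i, false) → CycFoll (cyclicReduce y) p (winv u))

open scoped Classical in
/-- The word `w_L(Y)`: a longest word cyclically preceding every occurrence of `a_i`
    in the cyclic reductions of the words of `Y` (trivial if there is no longest one). -/
noncomputable def wL {n : ℕ} (i : Fin n) (Y : List (Wrd n)) : Wrd n :=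
  if h : ∃ u, IsPrecWord i Y u ∧ ∀ u', IsPrecWord i Y u' → u'.length ≤ u.length
  then h.choose else []

/-- The set of cyclic positions of `v` occupied by the occurrences of a preceding word of
    length `len` around the occurrences of `a_i^{±1}`. -/
def LOcc {n : ℕ} (i : Fin n) (len : ℕ) (v : Wrd n) : Set ℕ :=
  {t | ∃ p k, p < v.length ∧ k < len ∧
    ((v[p]? = some (i, true) ∧ t = (p + v.length - 1 - k) % v.length) ∨
     (v[p]? = some (i, false) ∧ t = (p + 1 + k) % v.length))}

/-- The set of cyclic positions of `v` occupied by the occurrences of a following word of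
    length `len` around the occurrences of `a_i^{±1}`. -/
def ROcc {n : ℕ} (i : Fin n) (len : ℕ) (v : Wrd n) : Set ℕ :=
  {t | ∃ p k, p < v.length ∧ k < len ∧
    ((v[p]? = some (i, true) ∧ t = (p + 1 + k) % v.length) ∨
     (v[p]? = some (i, false) ∧ t = (p + v.length - 1 - k) % v.length))}

/-- `u` cyclically follows every occurrence of `a_i` (and `u⁻¹` precedes every `a_i⁻¹`)
    in the cyclic reductions of the words of `Y`, with no occurrence of `u` intersecting an
    occurrence of `w_L(Y)`. -/
def IsFolWord {n : ℕ} (i : Fin n) (Y : List (Wrd n)) (u : Wrd n) : Prop :=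
  Avoids i u ∧ (∀ y ∈ Y, ∀ p < (cyclicReduce y).length,
    ((cyclicReduce y)[p]? = some (i, true) → CycFoll (cyclicReduce y) p u) ∧
    ((cyclicReduce y)[p]? = some (i, false) → CycPrec (cyclicReduce y) p (winv u))) ∧
  ∀ y ∈ Y, Disjoint (LOcc i (wL i Y).length (cyclicReduce y)) (ROcc i u.length (cyclicReduce y))

open scoped Classical in
/-- The word `w_R(Y)`. -/
noncomputable def wR {n : ℕ} (i : Fin n) (Y : List (Wrd n)) : Wrd n :=
  if h : ∃ u, IsFolWord i Y u ∧ ∀ u', IsFolWord i Y u' → u'.length ≤ u.length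
  then h.choose else []

/-- The auxiliary automorphism `α'` sending `a_i` to `w_L⁻¹ a_i w_R⁻¹`. -/
noncomputable def alphaP {n : ℕ} (i : Fin n) (Y : List (Wrd n)) :
    FreeGroup (Fin n) →* FreeGroup (Fin n) :=
  FreeGroup.lift fun j => if j = i then
    (FreeGroup.mk (wL i Y))⁻¹ * FreeGroup.of i * (FreeGroup.mk (wR i Y))⁻¹
  else FreeGroup.of j

/-- The cyclic reduction of `α'(y)` written as a reduced word. -/
noncomputable def apWord {n : ℕ} (i : Fin n) (Y : List (Wrd n)) (y : Wrd n) : Wrd n :=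
  cyclicReduce (FreeGroup.toWord (alphaP i Y (FreeGroup.mk y)))

/-- In `α' Y`, every maximal power of `a_i` either occurs by itself as an element, or is
    cyclically conjugated by `u`. -/
def IsConjWord {n : ℕ} (i : Fin n) (Y : List (Wrd n)) (u : Wrd n) : Prop :=
  Avoids i u ∧ ∀ y ∈ Y,
    (∀ c ∈ apWord i Y y, c.1 = i) ∨
    ∀ p < (apWord i Y y).length,
      (apWord i Y y)[p]?.map Prod.fst = some i →
        (((apWord i Y y)[(p + (apWord i Y y).length - 1) % (apWord i Y y).length]?.map
            Prod.fst ≠ some i → CycPrec (apWord i Y y) p (winv u)) ∧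
         ((apWord i Y y)[(p + 1) % (apWord i Y y).length]?.map Prod.fst ≠ some i →
            CycFoll (apWord i Y y) p u))

open scoped Classical in
/-- The word `w_C(Y)` (trivial when every maximal power of `a_i` occurs by itself,
    since then there is no longest conjugating word). -/
noncomputable def wC {n : ℕ} (i : Fin n) (Y : List (Wrd n)) : Wrd n :=
  if h : ∃ u, IsConjWord i Y u ∧ ∀ u', IsConjWord i Y u' → u'.length ≤ u.length
  then h.choose else []

/-- The automorphism `α_Y` sending `a_i` to `w_L⁻¹ w_C a_i w_C⁻¹ w_R⁻¹`. -/
noncomputable def alphaFG {n : ℕ} (i : Fin n) (Y : List (Wrd n)) :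
    FreeGroup (Fin n) →* FreeGroup (Fin n) :=
  FreeGroup.lift fun j => if j = i then
    (FreeGroup.mk (wL i Y))⁻¹ * FreeGroup.mk (wC i Y) * FreeGroup.of i *
      (FreeGroup.mk (wC i Y))⁻¹ * (FreeGroup.mk (wR i Y))⁻¹
  else FreeGroup.of j

/-- `u` is an `i`-chunk of `g`: a maximal cyclic subword of the cyclic reduction of `g`
    containing no `a_i^{±1}`. -/
def IsIChunk {n : ℕ} (i : Fin n) (g : FreeGroup (Fin n)) (u : Wrd n) : Prop :=
  Avoids i u ∧
    ((∃ p < (cyclicReduce g.toWord).length,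
        (cyclicReduce g.toWord)[p]?.map Prod.fst = some i ∧
        u <+: (cyclicReduce g.toWord ++ cyclicReduce g.toWord).drop (p + 1) ∧
        ((cyclicReduce g.toWord ++ cyclicReduce g.toWord).drop (p + 1 + u.length)).head?.map
          Prod.fst = some i) ∨
     (Avoids i (cyclicReduce g.toWord) ∧ ∃ p ≤ (cyclicReduce g.toWord).length,
        u = (cyclicReduce g.toWord).drop p ++ (cyclicReduce g.toWord).take p))

/-- `k(Y)`: the maximal conjugate reduced `i`-length of an `i`-chunk of `α_Y y`, `y ∈ Y`. -/
noncomputable def kLen {n : ℕ} (i : Fin n) (Y : List (Wrd n)) : ℕ :=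
  sSup {c | ∃ y ∈ Y, ∃ u, IsIChunk i (alphaFG i Y (FreeGroup.mk y)) u ∧ c = crLen i u}

/-- The full `i`-length `|Y|_i = k(Y) + |w_R(Y) w_L(Y)|_i^cr` of a set of reduced words. -/
noncomputable def fullLen {n : ℕ} (i : Fin n) (Y : List (Wrd n)) : ℕ :=
  kLen i Y + crLen i (wR i Y ++ wL i Y)

/-- `x` is an (ordered) basis of the free group: it freely generates, i.e. the induced
    endomorphism of the free group is bijective. -/
def IsBasis {n : ℕ} (x : Fin n → FreeGroup (Fin n)) : Prop :=
  Function.Bijective (FreeGroup.lift x)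

/-- A basis of `F_n` given by reduced words over the standard basis. -/
def IsWordBasis {n : ℕ} (x : Fin n → Wrd n) : Prop :=
  (∀ j, Reduced (x j)) ∧ IsBasis fun j => FreeGroup.mk (x j)

/-- `(A, B)` is a free factorization of `G` into two nontrivial free factors. -/
def IsFacPair {G : Type*} [Group G] (A B : Subgroup G) : Prop :=
  A ≠ ⊥ ∧ B ≠ ⊥ ∧ Function.Bijective (Monoid.Coprod.lift A.subtype B.subtype)

/-- `(P, Q, R)` is a free factorization of `G` into three nontrivial free factors. -/
def IsFac3 {G : Type*} [Group G] (P Q R : Subgroup G) : Prop :=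
  P ≠ ⊥ ∧ Q ≠ ⊥ ∧ R ≠ ⊥ ∧
    Function.Bijective (Monoid.CoprodI.lift fun j : Fin 3 => (![P, Q, R] j).subtype)

/-- The conjugate of a subgroup. -/
def conjSub {G : Type*} [Group G] (g : G) (H : Subgroup G) : Subgroup G :=
  H.map (MulAut.conj g).toMonoidHom

/-- Two (ordered) pairs of subgroups determine the same vertex: they agree up to
    conjugation and swapping the factors. -/
def FacRel {G : Type*} [Group G] (p q : Subgroup G × Subgroup G) : Prop :=
  ∃ g : G, (q.1 = conjSub g p.1 ∧ q.2 = conjSub g p.2) ∨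
           (q.1 = conjSub g p.2 ∧ q.2 = conjSub g p.1)

/-- Vertices of the edge splitting graph: pairs of subgroups up to conjugation and swap. -/
abbrev ESV (n : ℕ) := Quot (@FacRel (FreeGroup (Fin n)) _)

/-- The vertex of the edge splitting graph represented by the pair `(A, B)`. -/
def esv {n : ℕ} (A B : Subgroup (FreeGroup (Fin n))) : ESV n := Quot.mk _ (A, B)

/-- The factorization `p` is refined by the factorization `q` via a common refinement
    `P * Q * R` into three nontrivial free factors: `p = (P*Q, R)` and `q = (P, Q*R)`. -/
def Refines {G : Type*} [Group G] (p q : Subgroup G × Subgroup G) : Prop :=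
  ∃ P Q R : Subgroup G, IsFac3 P Q R ∧ p.1 = P ⊔ Q ∧ p.2 = R ∧ q.1 = P ∧ q.2 = Q ⊔ R

/-- The edge splitting graph `ES(n)`: two distinct vertices are adjacent if they admit
    representatives with a common refinement into three nontrivial free factors. -/
def ESGraph (n : ℕ) : SimpleGraph (ESV n) where
  Adj X Y := X ≠ Y ∧ ∃ p q, Quot.mk _ p = X ∧ Quot.mk _ q = Y ∧ (Refines p q ∨ Refines q p)
  symm := ⟨by
    rintro X Y ⟨hne, p, q, hp, hq, h⟩
    exact ⟨hne.symm, q, p, hq, hp, h.symm⟩⟩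
  loopless := ⟨fun X h => h.1 rfl⟩

/-- Nested families of canceling pairs:  `Fam w gs f` holds iff `w` carries a nested family
    `F` of `f` canceling pairs whose family of (possibly empty) maximal subwords disjoint
    from the pairs is `gs`. -/
inductive Fam {n : ℕ} : Wrd n → List (Wrd n) → ℕ → Prop
  | gap (g : Wrd n) : Fam g [g] 0
  | cons (g u w rest : Wrd n) (gs₁ gs₂ : List (Wrd n)) (f₁ f₂ : ℕ) :
      u ≠ [] → Fam w gs₁ f₁ → Fam rest gs₂ f₂ →
      Fam (g ++ u ++ w ++ winv u ++ rest) (g :: (gs₁ ++ gs₂)) (f₁ + f₂ + 1)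

end ESPaper

namespace List

variable {α : Type*}

theorem consecutivePairs_prefix_append : ∀ l t : List α,
    l.consecutivePairs <+: (l ++ t).consecutivePairs
  | [], _ => by simp
  | [_], _ => nil_prefix
  | a :: b :: l, t => (prefix_cons_inj (a, b)).mpr (consecutivePairs_prefix_append (b :: l) t)

theorem consecutivePairs_suffix_cons (a : α) : ∀ l : List α,
    l.consecutivePairs <:+ (a :: l).consecutivePairs
  | [] => by simp
  | b :: l => suffix_cons (a, b) _

theorem IsInfix.consecutivePairs {l₁ l₂ : List α} (h : l₁ <:+: l₂) :
    l₁.consecutivePairs <:+: l₂.consecutivePairs := by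
  obtain ⟨s, t, rfl⟩ := h
  induction s with
  | nil => exact (consecutivePairs_prefix_append l₁ t).isInfix
  | cons a s ih => exact ih.trans (consecutivePairs_suffix_cons a _).isInfix

theorem exists_split_of_flatten_eq_append :
    ∀ {ps : List (List α)} {u v : List α}, ps.flatten = u ++ v →
      ∃ qs rs s r, qs ⊆ ps ∧ rs ⊆ ps ∧ u = qs.flatten ++ s ∧ v = r ++ rs.flatten ∧
        ps.length ≤ qs.length + rs.length + 1
  | [], u, v, h => ⟨[], [], u, v, by simp_all⟩
  | p :: ps, u, v, h => by
    rw [flatten_cons] at h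
    rcases append_eq_append_iff.mp h with ⟨a, rfl, hps⟩ | ⟨c, rfl, rfl⟩
    · obtain ⟨qs, rs, s, r, hqs, hrs, rfl, rfl, hlen⟩ := exists_split_of_flatten_eq_append hps
      exact ⟨p :: qs, rs, s, r, cons_subset_cons p hqs, subset_cons_of_subset p hrs,
        by simp, rfl, by simp; omega⟩
    · exact ⟨[], ps, u, c, nil_subset _, subset_cons_self _ ps, by simp, rfl, by simp⟩

end List

namespace ESPaper

theorem HasCutVertex.anti {V : Type*} {G G' : SimpleGraph V} (h : G ≤ G')
    (hG' : HasCutVertex G') : HasCutVertex G := by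
  obtain ⟨v, H₁, H₂, hsup, hint, h₁, h₂⟩ := hG'
  let f := SimpleGraph.Hom.ofLE h
  refine ⟨v, H₁.comap f, H₂.comap f, ?_, hint, h₁, h₂⟩
  rw [← SimpleGraph.Subgraph.comap_equiv_top f, ← hsup]
  ext <;> simp [f, and_or_left]

section

variable {n : ℕ} (i : Fin n)

theorem wGraph_le_of_infix {w w' : Wrd n} (h : w <:+: w') : WGraph i w ≤ WGraph i w' :=
  fun _ _ ⟨hne, p, hp, hadj⟩ => ⟨hne, p, h.consecutivePairs.subset hp, hadj⟩

def IsSimpleBlock (w : Wrd n) : Prop := w ≠ [] ∧ ¬ HasCutVertex (WGraph i w)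

variable {i}

theorem IsSimpleBlock.of_infix {w w' : Wrd n} (h : w <:+: w')
    (hw : IsSimpleBlock i w) : IsSimpleBlock i w' :=
  ⟨fun h' => hw.1 (List.eq_nil_of_infix_nil (h' ▸ h)),
    fun hcut => hw.2 (hcut.anti (wGraph_le_of_infix i h))⟩

theorem length_le_simpleLen {ps : List (Wrd n)} (hps : ∀ p ∈ ps, IsSimpleBlock i p) :
    ps.length ≤ simpleLen i ps.flatten := by
  refine le_csSup ⟨ps.flatten.length, ?_⟩ ⟨ps, rfl, rfl, hps⟩
  rintro _ ⟨qs, rfl, hqs, hsimple⟩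
  calc qs.length = (qs.map List.length).length := (List.length_map _).symm
    _ ≤ (qs.map List.length).sum := List.length_le_sum_of_one_le _ (by
        simpa [Nat.one_le_iff_ne_zero] using fun q hq => (hsimple q hq).1)
    _ = ps.flatten.length := by rw [← List.length_flatten, hqs]

theorem length_le_simpleLen_flatten_append {ps : List (Wrd n)}
    (hps : ∀ p ∈ ps, IsSimpleBlock i p) (s : Wrd n) :
    ps.length ≤ simpleLen i (ps.flatten ++ s) := by
  rcases List.eq_nil_or_concat ps with rfl | ⟨qs, q, rfl⟩
  · simp
  have hblocks : ∀ p ∈ qs ++ [q ++ s], IsSimpleBlock i p := by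
    simp only [List.mem_append, List.mem_singleton]
    rintro p (hp | rfl)
    · exact hps p (by simp [hp])
    · exact (hps q (by simp)).of_infix (List.prefix_append q s).isInfix
  simpa using length_le_simpleLen hblocks

theorem length_le_simpleLen_append_flatten {ps : List (Wrd n)}
    (hps : ∀ p ∈ ps, IsSimpleBlock i p) (s : Wrd n) :
    ps.length ≤ simpleLen i (s ++ ps.flatten) := by
  rcases ps with _ | ⟨q, qs⟩
  · simp
  have hblocks : ∀ p ∈ (s ++ q) :: qs, IsSimpleBlock i p := by
    simp only [List.mem_cons]
    rintro p (rfl | hp)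
    · exact (hps q (by simp)).of_infix (List.suffix_append s q).isInfix
    · exact hps p (by simp [hp])
  simpa using length_le_simpleLen hblocks

end

theorem statement2_general (n : ℕ) (i : Fin n) (u v : Wrd n) :
    simpleLen i (u ++ v) ≤ simpleLen i u + simpleLen i v + 1 := by
  refine csSup_le' ?_
  rintro _ ⟨ps, rfl, hflat, hps⟩
  obtain ⟨qs, rs, s, r, hqs, hrs, rfl, rfl, hlen⟩ := List.exists_split_of_flatten_eq_append hflat
  have hu := length_le_simpleLen_flatten_append (fun p hp => hps p (hqs hp)) s
  have hv := length_le_simpleLen_append_flatten (fun p hp => hps p (hrs hp)) r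
  omega

/-- simple `i`-length is almost subadditive under concatenation. -/
theorem statement2 (n : ℕ) (hn : 2 < n) (i : Fin n) (u v : Wrd n)
    (hu : Reduced u) (hv : Reduced v) (huv : Reduced (u ++ v))
    (havu : Avoids i u) (havv : Avoids i v) :
    simpleLen i (u ++ v) ≤ simpleLen i u + simpleLen i v + 1 :=
  statement2_general n i u v

end ESPaper
end

section
/- For any freely reduced words u and v not containing a_i^{±1}, the conjugate reduced i-length satisfies |u|_i^cr − |v|_i^cr − 1 ≤ |uv|_i^cr ≤ |u|_i^cr + |v|_i^cr + 1. -/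
namespace ESPaper

/-!
Concatenating decompositions `u = ∏ v_j^{u_j}` and `v = ∏ v'_k^{u'_k}` gives a decomposition
of `uv` with one more factor, so `|uv| ≤ |u| + |v| + 1`. Inverting a decomposition of `v`
(reverse the product and invert every `v_j`, which changes neither its Whitehead graph nor its
simple length) shows `|v⁻¹| ≤ |v|`, and the lower bound is the upper bound applied to
`u = (uv) v⁻¹`.
-/

lemma mem_zip_tail_iff_infix {α : Type*} {l : List α} {a b : α} :
    (a, b) ∈ l.zip l.tail ↔ [a, b] <:+: l := by
  induction l with
  | nil => simp
  | cons c l ih =>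
    cases l with
    | nil => simpa using fun h : [a, b] <:+: [c] => absurd h.length_le (by simp)
    | cons d l =>
      rw [List.infix_cons_iff, ← ih]
      simp [List.zip_cons_cons]

lemma zip_reverse {α β : Type*} {l : List α} {l' : List β} (h : l.length = l'.length) :
    l.reverse.zip l'.reverse = (l.zip l').reverse := by
  simp [List.zip_eq_zipWith, List.reverse_zipWith h]

section Inversion

variable {n : ℕ}

@[simp]
lemma linv_linv (c : Ltr n) : linv (linv c) = c := by
  simp [linv]

@[simp]
lemma winv_winv (w : Wrd n) : winv (winv w) = w := by
  simp [winv, List.map_reverse, Function.comp_def]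

lemma winv_append (a b : Wrd n) : winv (a ++ b) = winv b ++ winv a := by
  simp [winv]

lemma winv_pair (a b : Ltr n) : winv [a, b] = [linv b, linv a] := rfl

lemma mk_winv (w : Wrd n) : FreeGroup.mk (winv w) = (FreeGroup.mk w)⁻¹ := by
  rw [FreeGroup.inv_mk, winv, FreeGroup.invRev, List.map_reverse]
  rfl

lemma reduced_winv {w : Wrd n} (h : Reduced w) : Reduced (winv w) := by
  change List.IsChain _ w at h
  change List.IsChain _ (w.reverse.map linv)
  rw [List.isChain_map, List.isChain_reverse]
  exact h.imp fun a b hab hba => hab (by simpa using hba.symm)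

lemma avoids_winv {i : Fin n} {w : Wrd n} (h : Avoids i w) : Avoids i (winv w) := by
  intro c hc
  simp only [winv, List.mem_map, List.mem_reverse] at hc
  obtain ⟨d, hd, rfl⟩ := hc
  exact h d hd

lemma winv_infix_winv {u w : Wrd n} (h : u <:+: w) : winv u <:+: winv w :=
  List.reverse_infix.2 h |>.map linv

end Inversion

section WhiteheadGraph

variable {n : ℕ} (i : Fin n)

lemma wGraph_winv_adj {w : Wrd n} {x y : WVert n i} (h : (WGraph i (winv w)).Adj x y) :
    (WGraph i w).Adj x y := by
  obtain ⟨hne, ⟨a, b⟩, hab, hxy⟩ := h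
  have hw : [linv b, linv a] <:+: w := by
    simpa [winv_pair] using winv_infix_winv (mem_zip_tail_iff_infix.1 hab)
  refine ⟨hne, (linv b, linv a), mem_zip_tail_iff_infix.2 hw, ?_⟩
  rcases hxy with ⟨hx, hy⟩ | ⟨hy, hx⟩
  · exact Or.inr ⟨hy, by simp [hx]⟩
  · exact Or.inl ⟨hx, by simp [hy]⟩

lemma wGraph_winv (w : Wrd n) : WGraph i (winv w) = WGraph i w := by
  ext x y
  refine ⟨wGraph_winv_adj i, fun h => wGraph_winv_adj i ?_⟩
  rwa [winv_winv]

end WhiteheadGraph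

section SimpleLength

variable {n : ℕ} (i : Fin n)

def simpleSet (w : Wrd n) : Set ℕ :=
  {t | ∃ ps : List (Wrd n), ps.length = t ∧ ps.flatten = w ∧
      ∀ p ∈ ps, p ≠ [] ∧ ¬ HasCutVertex (WGraph i p)}

lemma flatten_reverse_map_winv (ps : List (Wrd n)) :
    (ps.map winv).reverse.flatten = winv ps.flatten := by
  induction ps with
  | nil => rfl
  | cons p ps ih => simp [ih, winv_append]

lemma simpleSet_subset_winv (w : Wrd n) : simpleSet i w ⊆ simpleSet i (winv w) := by
  rintro t ⟨ps, rfl, rfl, hps⟩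
  refine ⟨(ps.map winv).reverse, by simp, flatten_reverse_map_winv ps, ?_⟩
  simp only [List.mem_map, List.mem_reverse, forall_exists_index, and_imp]
  rintro _ p hp rfl
  refine ⟨?_, by rw [wGraph_winv]; exact (hps p hp).2⟩
  simpa [winv] using (hps p hp).1

lemma simpleLen_winv (w : Wrd n) : simpleLen i (winv w) = simpleLen i w := by
  have h := simpleSet_subset_winv i (winv w)
  rw [winv_winv] at h
  exact congrArg sSup (h.antisymm (simpleSet_subset_winv i w))

end SimpleLength

section ConjugateReducedLength

variable {n : ℕ} {i : Fin n}

variable (i) in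
def crSet (w : Wrd n) : Set ℕ :=
  {k | ∃ vs us : List (Wrd n), vs ≠ [] ∧ us.length = vs.length ∧
      (∀ v ∈ vs, Reduced v ∧ Avoids i v) ∧
      FreeGroup.mk w =
        ((vs.zip us).map fun p => (FreeGroup.mk p.2)⁻¹ * FreeGroup.mk p.1 * FreeGroup.mk p.2).prod ∧
      k = (vs.length - 1) + (vs.map (simpleLen i)).sum}

lemma simpleLen_mem_crSet {w : Wrd n} (hred : Reduced w) (hav : Avoids i w) :
    simpleLen i w ∈ crSet i w :=
  ⟨[w], [[]], by simp, rfl, by simpa using ⟨hred, hav⟩, by simp, by simp⟩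

lemma crSet_nonempty {w : Wrd n} (hred : Reduced w) (hav : Avoids i w) :
    (crSet i w).Nonempty :=
  ⟨_, simpleLen_mem_crSet hred hav⟩

lemma mem_crSet_winv {w : Wrd n} {k : ℕ} (hk : k ∈ crSet i w) : k ∈ crSet i (winv w) := by
  obtain ⟨vs, us, hne, hlen, hvs, hprod, rfl⟩ := hk
  refine ⟨vs.reverse.map winv, us.reverse, by simpa using hne, by simp [hlen], ?_, ?_, ?_⟩
  · simp only [List.mem_map, List.mem_reverse, forall_exists_index, and_imp]
    rintro _ v hv rfl
    exact ⟨reduced_winv (hvs v hv).1, avoids_winv (hvs v hv).2⟩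
  · rw [mk_winv, hprod, List.prod_inv_reverse, List.zip_map_left, zip_reverse hlen.symm]
    simp only [List.map_reverse, List.map_map]
    congr 2
    refine List.map_congr_left fun p _ => ?_
    simp only [Function.comp_apply, Prod.map_fst, Prod.map_snd, id, mk_winv]
    group
  · simp [List.map_reverse, Function.comp_def, simpleLen_winv]

lemma add_add_one_mem_crSet {w₁ w₂ w₃ : Wrd n} {k₁ k₂ : ℕ}
    (h : FreeGroup.mk w₃ = FreeGroup.mk w₁ * FreeGroup.mk w₂)
    (h₁ : k₁ ∈ crSet i w₁) (h₂ : k₂ ∈ crSet i w₂) : k₁ + k₂ + 1 ∈ crSet i w₃ := by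
  obtain ⟨vs₁, us₁, hne₁, hlen₁, hvs₁, hprod₁, rfl⟩ := h₁
  obtain ⟨vs₂, us₂, hne₂, hlen₂, hvs₂, hprod₂, rfl⟩ := h₂
  refine ⟨vs₁ ++ vs₂, us₁ ++ us₂, by simp [hne₁], by simp [hlen₁, hlen₂], ?_, ?_, ?_⟩
  · exact fun v hv => (List.mem_append.1 hv).elim (hvs₁ v) (hvs₂ v)
  · rw [h, hprod₁, hprod₂, List.zip_append hlen₁.symm, List.map_append, List.prod_append]
  · have := List.length_pos_iff.2 hne₁
    have := List.length_pos_iff.2 hne₂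
    simp only [List.length_append, List.map_append, List.sum_append]
    omega

lemma crLen_le_of_mk_eq_mul {w₁ w₂ w₃ : Wrd n}
    (h : FreeGroup.mk w₃ = FreeGroup.mk w₁ * FreeGroup.mk w₂)
    (h₁ : (crSet i w₁).Nonempty) (h₂ : (crSet i w₂).Nonempty) :
    crLen i w₃ ≤ crLen i w₁ + crLen i w₂ + 1 :=
  Nat.sInf_le (add_add_one_mem_crSet h (Nat.sInf_mem h₁) (Nat.sInf_mem h₂))

lemma crLen_winv_le {w : Wrd n} (h : (crSet i w).Nonempty) : crLen i (winv w) ≤ crLen i w :=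
  Nat.sInf_le (mem_crSet_winv (Nat.sInf_mem h))

end ConjugateReducedLength

theorem statement6_general (n : ℕ) (i : Fin n) (u v : Wrd n)
    (hu : Reduced u) (hv : Reduced v) (havu : Avoids i u) (havv : Avoids i v) :
    (crLen i u : ℤ) - crLen i v - 1 ≤ crLen i (u ++ v) ∧
      (crLen i (u ++ v) : ℤ) ≤ crLen i u + crLen i v + 1 := by
  have hU := crSet_nonempty hu havu
  have hV := crSet_nonempty hv havv
  have hUV : FreeGroup.mk (u ++ v) = FreeGroup.mk u * FreeGroup.mk v := FreeGroup.mul_mk.symm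
  have hU' : FreeGroup.mk u = FreeGroup.mk (u ++ v) * FreeGroup.mk (winv v) := by
    rw [hUV, mk_winv, mul_inv_cancel_right]
  have upper := crLen_le_of_mk_eq_mul hUV hU hV
  have lower := crLen_le_of_mk_eq_mul hU'
    ⟨_, add_add_one_mem_crSet hUV (Nat.sInf_mem hU) (Nat.sInf_mem hV)⟩
    ⟨_, mem_crSet_winv (Nat.sInf_mem hV)⟩
  have inv := crLen_winv_le hV
  omega

/-- conjugate reduced `i`-length under multiplication. -/
theorem statement6 (n : ℕ) (hn : 2 < n) (i : Fin n) (u v : Wrd n)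
    (hu : Reduced u) (hv : Reduced v) (havu : Avoids i u) (havv : Avoids i v) :
    (crLen i u : ℤ) - crLen i v - 1 ≤ crLen i (u ++ v) ∧
      (crLen i (u ++ v) : ℤ) ≤ crLen i u + crLen i v + 1 :=
  statement6_general n i u v hu hv havu havv

end ESPaper
end
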